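/- Pareto stationarity rate (Theorem 3, explicit finite form): let E be a complete real inner product space, L_e : E → ℝ G-smooth and bounded below by m, and L_p : E → ℝ differentiable. Let iterates satisfy θ_{i+1} = θ_i − α d_i with d_i = ∇L_e(θ_i) + λ_i ∇L_p(θ_i), λ_i ≥ 0, 0 < α ≤ 1/G, and ⟨∇L_p(θ_i), d_i⟩ ≤ ε_i with λ_i ε_i ≥ 0 for i = 1, …, t. Then min_{1 ≤ i ≤ t} inf_{(μ_e, μ_p) ∈ Δ₂} ‖μ_e ∇L_e(θ_i) + μ_p ∇L_p(θ_i)‖² ≤ (1/t) [ (2/α)(L_e(θ_1) − m) + 2 Σ_{i=1}^{t} λ_i ε_i ]. -/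

import Mathlib

/-!
Each step `θ ↦ θ - α d` with `d = ∇L_e + λ ∇L_p` is a descent step for the `G`-smooth `L_e`
up to the error `αλ⟪∇L_p, d⟫ ≤ αλε`: since `Gα ≤ 1`, the descent lemma gives
`(α/2)‖d‖² ≤ L_e(θ) - L_e(θ - α d) + αλε`. Summing over the `t` steps telescopes `L_e`, and
`L_e ≥ m` bounds `∑ ‖dᵢ‖²`. Finally `dᵢ / (1 + λᵢ)` is a point of the segment between
`∇L_e(θᵢ)` and `∇L_p(θᵢ)` of norm at most `‖dᵢ‖`, and the minimum is at most the average.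
-/

open RealInnerProductSpace

theorem Finset.card_nsmul_inf'_le_sum {ι M : Type*} [AddCommMonoid M] [LinearOrder M]
    [IsOrderedAddMonoid M] (s : Finset ι) (hs : s.Nonempty) (f : ι → M) :
    s.card • s.inf' hs f ≤ ∑ i ∈ s, f i :=
  s.card_nsmul_le_sum f _ fun _ hi => s.inf'_le f hi

section Smooth

variable {E : Type*} [NormedAddCommGroup E] [InnerProductSpace ℝ E]
  {f : E → ℝ} {g : E → E} {G : ℝ}

theorem inner_sub_gradient_le_of_lipschitz (hlip : ∀ x y, ‖g x - g y‖ ≤ G * ‖x - y‖)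
    (x v : E) {s : ℝ} (hs : 0 ≤ s) : ⟪g (x + s • v) - g x, v⟫ ≤ G * s * ‖v‖ ^ 2 :=
  calc ⟪g (x + s • v) - g x, v⟫ ≤ ‖g (x + s • v) - g x‖ * ‖v‖ := real_inner_le_norm _ _
    _ ≤ G * ‖s • v‖ * ‖v‖ := by
        gcongr
        simpa using hlip (x + s • v) x
    _ = G * s * ‖v‖ ^ 2 := by rw [norm_smul, Real.norm_of_nonneg hs]; ring

theorem apply_add_le_of_lipschitz_gradient [CompleteSpace E] (hf : ∀ x, HasGradientAt f (g x) x)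
    (hlip : ∀ x y, ‖g x - g y‖ ≤ G * ‖x - y‖) (x v : E) :
    f (x + v) ≤ f x + ⟪g x, v⟫ + G / 2 * ‖v‖ ^ 2 := by
  set φ : ℝ → ℝ := fun s => f (x + s • v) - s * ⟪g x, v⟫ - G / 2 * s ^ 2 * ‖v‖ ^ 2
  have hφ : ∀ s : ℝ, HasDerivAt φ (⟪g (x + s • v), v⟫ - ⟪g x, v⟫ - G * s * ‖v‖ ^ 2) s := by
    intro s
    have hline : HasDerivAt (fun s : ℝ => x + s • v) v s := by
      simpa using ((hasDerivAt_id s).smul_const v).const_add x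
    have hlin : HasDerivAt (fun s : ℝ => s * ⟪g x, v⟫) ⟪g x, v⟫ s := by
      simpa using (hasDerivAt_id s).mul_const ⟪g x, v⟫
    have hquad : HasDerivAt (fun s : ℝ => G / 2 * s ^ 2 * ‖v‖ ^ 2) (G * s * ‖v‖ ^ 2) s :=
      (((hasDerivAt_pow 2 s).const_mul (G / 2)).mul_const (‖v‖ ^ 2)).congr_deriv (by ring)
    exact (((hf _).hasFDerivAt.comp_hasDerivAt s hline).sub hlin).sub hquad
  have hanti : AntitoneOn φ (Set.Icc 0 1) := by
    refine antitoneOn_of_hasDerivWithinAt_nonpos (convex_Icc 0 1)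
      (fun s _ => (hφ s).continuousAt.continuousWithinAt) (fun s _ => (hφ s).hasDerivWithinAt)
      fun s hs => ?_
    rw [interior_Icc] at hs
    have := inner_sub_gradient_le_of_lipschitz hlip x v hs.1.le
    rw [inner_sub_left] at this
    linarith
  have h01 : φ 1 ≤ φ 0 := hanti (by norm_num) (by norm_num) zero_le_one
  norm_num [φ] at h01
  linarith

theorem norm_sq_le_of_descent_step [CompleteSpace E] (hf : ∀ x, HasGradientAt f (g x) x)
    (hlip : ∀ x y, ‖g x - g y‖ ≤ G * ‖x - y‖) {x w d : E} {lam α : ℝ}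
    (hd : d = g x + lam • w) (hα : 0 < α) (hGα : G * α ≤ 1) :
    ‖d‖ ^ 2 ≤ 2 / α * (f x - f (x - α • d)) + 2 * (lam * ⟪w, d⟫) := by
  have hdesc := apply_add_le_of_lipschitz_gradient hf hlip x (-(α • d))
  have hinner : ⟪g x, d⟫ = ‖d‖ ^ 2 - lam * ⟪w, d⟫ := by
    rw [show g x = d - lam • w by rw [hd]; abel, inner_sub_left, real_inner_smul_left,
      real_inner_self_eq_norm_sq]
  rw [← sub_eq_add_neg, inner_neg_right, real_inner_smul_right, hinner, norm_neg, norm_smul,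
    Real.norm_of_nonneg hα.le] at hdesc
  have hdecrease : α / 2 * ‖d‖ ^ 2 ≤ f x - f (x - α • d) + α * (lam * ⟪w, d⟫) := by
    nlinarith [sq_nonneg ‖d‖]
  calc ‖d‖ ^ 2 = 2 / α * (α / 2 * ‖d‖ ^ 2) := by field_simp
    _ ≤ 2 / α * (f x - f (x - α • d) + α * (lam * ⟪w, d⟫)) := by gcongr
    _ = 2 / α * (f x - f (x - α • d)) + 2 * (lam * ⟪w, d⟫) := by field_simp

end Smooth

section ParetoGap

variable {E : Type*} [NormedAddCommGroup E] [InnerProductSpace ℝ E]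

noncomputable def paretoGapSq (u v : E) : ℝ :=
  sInf {x : ℝ | ∃ μe μp : ℝ, 0 ≤ μe ∧ 0 ≤ μp ∧ μe + μp = 1 ∧ x = ‖μe • u + μp • v‖ ^ 2}

theorem paretoGapSq_le_norm_add_smul_sq (u v : E) {lam : ℝ} (hlam : 0 ≤ lam) :
    paretoGapSq u v ≤ ‖u + lam • v‖ ^ 2 := by
  have hpos : 0 < 1 + lam := by linarith
  have hbdd : BddBelow {x : ℝ | ∃ μe μp : ℝ, 0 ≤ μe ∧ 0 ≤ μp ∧ μe + μp = 1 ∧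
      x = ‖μe • u + μp • v‖ ^ 2} :=
    ⟨0, by rintro _ ⟨μe, μp, -, -, -, rfl⟩; positivity⟩
  have hmem : ‖(1 + lam)⁻¹ • (u + lam • v)‖ ^ 2 ∈ {x : ℝ | ∃ μe μp : ℝ, 0 ≤ μe ∧ 0 ≤ μp ∧
      μe + μp = 1 ∧ x = ‖μe • u + μp • v‖ ^ 2} := by
    refine ⟨(1 + lam)⁻¹, lam / (1 + lam), by positivity, by positivity, by field_simp, ?_⟩
    rw [smul_add, smul_smul, div_eq_inv_mul]
  refine (csInf_le hbdd hmem).trans ?_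
  rw [norm_smul, mul_pow, Real.norm_of_nonneg (by positivity)]
  have hshrink : (1 + lam)⁻¹ ^ 2 ≤ 1 :=
    pow_le_one₀ (by positivity) (inv_le_one_of_one_le₀ (by linarith))
  nlinarith [sq_nonneg ‖u + lam • v‖]

end ParetoGap

theorem pareto_stationarity_rate_general
    {E : Type*} [NormedAddCommGroup E] [InnerProductSpace ℝ E] [CompleteSpace E]
    (Le : E → ℝ) (gradLe gradLp : E → E) (G m : ℝ)
    (hgradLe : ∀ x : E, HasGradientAt Le (gradLe x) x)
    (hLipLe : ∀ x y : E, ‖gradLe x - gradLe y‖ ≤ G * ‖x - y‖)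
    (hbelow : ∀ x : E, m ≤ Le x)
    (θ : ℕ → E) (d : ℕ → E) (lam ε : ℕ → ℝ) (α : ℝ) (t : ℕ) (ht : 1 ≤ t)
    (hα0 : 0 < α) (hαG : α ≤ 1 / G)
    (hlam : ∀ i, 1 ≤ i → i ≤ t → 0 ≤ lam i)
    (hd : ∀ i, 1 ≤ i → i ≤ t → d i = gradLe (θ i) + lam i • gradLp (θ i))
    (hupdate : ∀ i, 1 ≤ i → i ≤ t → θ (i + 1) = θ i - α • d i)
    (hconstr : ∀ i, 1 ≤ i → i ≤ t → ⟪gradLp (θ i), d i⟫ ≤ ε i) :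
    (Finset.Icc 1 t).inf' (Finset.nonempty_Icc.mpr ht)
        (fun i =>
          sInf {x : ℝ | ∃ μe μp : ℝ, 0 ≤ μe ∧ 0 ≤ μp ∧ μe + μp = 1 ∧
              x = ‖μe • gradLe (θ i) + μp • gradLp (θ i)‖ ^ 2}) ≤
      (1 / (t : ℝ)) *
        ((2 / α) * (Le (θ 1) - m) + 2 * ∑ i ∈ Finset.Icc 1 t, lam i * ε i) := by
  have hG : 0 < G := one_div_pos.mp (hα0.trans_le hαG)
  have hGα : G * α ≤ 1 := by rwa [le_div_iff₀ hG, mul_comm] at hαG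
  have hgap : ∀ i ∈ Finset.Icc 1 t, paretoGapSq (gradLe (θ i)) (gradLp (θ i)) ≤
      2 / α * (Le (θ i) - Le (θ (i + 1))) + 2 * (lam i * ε i) := by
    intro i hi
    obtain ⟨h1, h2⟩ := Finset.mem_Icc.mp hi
    have hsegment := paretoGapSq_le_norm_add_smul_sq (gradLe (θ i)) (gradLp (θ i)) (hlam i h1 h2)
    have hdesc := norm_sq_le_of_descent_step hgradLe hLipLe (hd i h1 h2) hα0 hGα
    have herr := mul_le_mul_of_nonneg_left (hconstr i h1 h2) (hlam i h1 h2)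
    rw [← hd i h1 h2] at hsegment
    rw [← hupdate i h1 h2] at hdesc
    linarith
  have htelescope : ∑ i ∈ Finset.Icc 1 t, (Le (θ i) - Le (θ (i + 1))) ≤ Le (θ 1) - m := by
    have := Finset.sum_Icc_sub ht fun i => -Le (θ i)
    simp only [sub_neg_eq_add, neg_add_eq_sub] at this
    linarith [hbelow (θ (t + 1))]
  have hsum := (Finset.card_nsmul_inf'_le_sum _ (Finset.nonempty_Icc.mpr ht) _).trans
    (Finset.sum_le_sum hgap)
  rw [Finset.sum_add_distrib, ← Finset.mul_sum, ← Finset.mul_sum, nsmul_eq_mul,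
    Nat.card_Icc, Nat.add_sub_cancel] at hsum
  rw [one_div_mul_eq_div, le_div_iff₀ (by exact_mod_cast ht), mul_comm]
  exact hsum.trans (by gcongr)

/-- Pareto stationarity rate: with L_e G-smooth and bounded below by m,
updates θ_{i+1} = θ_i − α d_i, d_i = ∇L_e(θ_i) + λ_i ∇L_p(θ_i), λ_i ≥ 0, 0 < α ≤ 1/G,
⟨∇L_p(θ_i), d_i⟩ ≤ ε_i, λ_i ε_i ≥ 0 for i = 1,…,t, the minimum over 1 ≤ i ≤ t of the
squared Pareto-stationarity gap inf_{Δ₂} ‖μ_e ∇L_e(θ_i) + μ_p ∇L_p(θ_i)‖² is at most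
(1/t)[(2/α)(L_e(θ_1) − m) + 2 Σ λ_i ε_i]. -/
theorem pareto_stationarity_rate
    {E : Type*} [NormedAddCommGroup E] [InnerProductSpace ℝ E] [CompleteSpace E]
    (Le Lp : E → ℝ) (gradLe gradLp : E → E) (G m : ℝ)
    (hgradLe : ∀ x : E, HasGradientAt Le (gradLe x) x)
    (hLipLe : ∀ x y : E, ‖gradLe x - gradLe y‖ ≤ G * ‖x - y‖)
    (hbelow : ∀ x : E, m ≤ Le x)
    (hgradLp : ∀ x : E, HasGradientAt Lp (gradLp x) x)
    (θ : ℕ → E) (d : ℕ → E) (lam ε : ℕ → ℝ) (α : ℝ) (t : ℕ) (ht : 1 ≤ t)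
    (hα0 : 0 < α) (hαG : α ≤ 1 / G)
    (hlam : ∀ i, 1 ≤ i → i ≤ t → 0 ≤ lam i)
    (hd : ∀ i, 1 ≤ i → i ≤ t → d i = gradLe (θ i) + lam i • gradLp (θ i))
    (hupdate : ∀ i, 1 ≤ i → i ≤ t → θ (i + 1) = θ i - α • d i)
    (hconstr : ∀ i, 1 ≤ i → i ≤ t → ⟪gradLp (θ i), d i⟫ ≤ ε i)
    (hle : ∀ i, 1 ≤ i → i ≤ t → 0 ≤ lam i * ε i) :
    (Finset.Icc 1 t).inf' (Finset.nonempty_Icc.mpr ht)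
        (fun i =>
          sInf {x : ℝ | ∃ μe μp : ℝ, 0 ≤ μe ∧ 0 ≤ μp ∧ μe + μp = 1 ∧
              x = ‖μe • gradLe (θ i) + μp • gradLp (θ i)‖ ^ 2}) ≤
      (1 / (t : ℝ)) *
        ((2 / α) * (Le (θ 1) - m) + 2 * ∑ i ∈ Finset.Icc 1 t, lam i * ε i) :=
  pareto_stationarity_rate_general Le gradLe gradLp G m hgradLe hLipLe hbelow θ d lam ε α t ht hα0
    hαG hlam hd hupdate hconstr
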